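/- Let f : [τ,T]×ℝ^d → ℝ^d be jointly continuous, let p_i ≥ 2 and C₁, C₂, α > 0, and suppose that for all t ∈ [τ,T] and all u ∈ ℝ₊^d: ∑_{i=1}^d |f^i(t,u)|^{p_i/(p_i−1)} ≤ C₁(1 + ∑_{i=1}^d |u^i|^{p_i}) and (f(t,u),u) ≥ α ∑_{i=1}^d |u^i|^{p_i} − C₂. Let 2 ≤ q_i ≤ p_i and for each n ≥ 1 define g̃^i(t,u) = |u^i|^{p_i−2} u^i + |u^i|^{q_i−2} u^i + f^i(t,0,…,0) and f̃_n^i(t,u) = ψ_n(|u|) f^i(t,u) + (1 − ψ_n(|u|)) g̃^i(t,u). Then there exist constants D₁, D₂, γ > 0, depending only on d, the p_i, the q_i, C₁, C₂ and α (and not on n), such that for all n ≥ 1, all t ∈ [τ,T] and all u ∈ ℝ₊^d: ∑_{i=1}^d |f̃_n^i(t,u)|^{p_i/(p_i−1)} ≤ D₁(1 + ∑_{i=1}^d |u^i|^{p_i}) and (f̃_n(t,u),u) ≥ γ ∑_{i=1}^d |u^i|^{p_i} − D₂. -/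

import Mathlib

/-- The truncated approximation
`f̃ₙ^i(t,u) = ψ_n(|u|) f^i(t,u)
  + (1 − ψ_n(|u|)) (|u^i|^{p_i−2} u^i + |u^i|^{q_i−2} u^i + f^i(t,0))`. -/
noncomputable def approxFnQ (d : ℕ) (p q : Fin d → ℝ) (ψ : ℕ → ℝ → ℝ)
    (f : ℝ → EuclideanSpace ℝ (Fin d) → EuclideanSpace ℝ (Fin d))
    (n : ℕ) (t : ℝ) (u : EuclideanSpace ℝ (Fin d)) : EuclideanSpace ℝ (Fin d) :=
  WithLp.toLp 2 (fun i => ψ n ‖u‖ * f t u i +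
    (1 - ψ n ‖u‖) * (|u i| ^ (p i - 2) * u i + |u i| ^ (q i - 2) * u i + f t 0 i))


lemma rpow_mul_self' {x : ℝ} (hx : 0 ≤ x) {a : ℝ} (ha : 0 < a + 1) :
    x ^ a * x = x ^ (a + 1) := by
  rcases eq_or_lt_of_le hx with h | h
  · rw [← h, mul_zero, Real.zero_rpow ha.ne']
  · rw [Real.rpow_add_one h.ne']

lemma young_half {a b pI : ℝ} (ha : 0 ≤ a) (hb : 0 ≤ b) (hp : 2 ≤ pI) :
    a * b ≤ a ^ (pI / (pI - 1)) + b ^ pI / 2 := by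
  have h1 : (1:ℝ) < pI := by linarith
  have hpq : (pI / (pI - 1)).HolderConjugate pI :=
    (Real.HolderConjugate.conjExponent h1).symm
  have hy := Real.young_inequality_of_nonneg ha hb hpq
  have h2 : a ^ (pI / (pI - 1)) / (pI / (pI - 1)) ≤ a ^ (pI / (pI - 1)) :=
    div_le_self (Real.rpow_nonneg ha _) hpq.lt.le
  have h3 : b ^ pI / pI ≤ b ^ pI / 2 := by
    have := Real.rpow_nonneg hb pI
    gcongr
  linarith

lemma combo_rpow_le {s a b e : ℝ} (hs0 : 0 ≤ s) (hs1 : s ≤ 1) (he : 0 ≤ e) :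
    |s * a + (1 - s) * b| ^ e ≤ |a| ^ e + |b| ^ e := by
  have h1 : |s * a + (1 - s) * b| ≤ max |a| |b| := by
    calc |s * a + (1 - s) * b| ≤ |s * a| + |(1 - s) * b| := abs_add_le _ _
      _ = s * |a| + (1 - s) * |b| := by
          rw [abs_mul, abs_mul, abs_of_nonneg hs0, abs_of_nonneg (by linarith : (0:ℝ) ≤ 1 - s)]
      _ ≤ s * max |a| |b| + (1 - s) * max |a| |b| := by
          gcongr
          · exact le_max_left _ _
          · exact le_max_right _ _
      _ = max |a| |b| := by ring
  have h2 := Real.rpow_le_rpow (abs_nonneg _) h1 he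
  rcases max_cases |a| |b| with ⟨hm, _⟩ | ⟨hm, _⟩ <;> rw [hm] at h2
  · exact h2.trans (le_add_of_nonneg_right (Real.rpow_nonneg (abs_nonneg _) _))
  · exact h2.trans (le_add_of_nonneg_left (Real.rpow_nonneg (abs_nonneg _) _))

lemma add3_rpow_le {A B C y e : ℝ} (hA : 0 ≤ A) (hB : 0 ≤ B) (hC : 0 ≤ C)
    (he0 : 0 ≤ e) (he2 : e ≤ 2) (h : |y| ≤ A + B + C) :
    |y| ^ e ≤ 9 * (A ^ e + B ^ e + C ^ e) := by
  set M := max A (max B C) with hM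
  have hM0 : 0 ≤ M := le_trans hA (le_max_left _ _)
  have h3 : |y| ≤ 3 * M := by
    have : A ≤ M := le_max_left _ _
    have : B ≤ M := le_trans (le_max_left _ _) (le_max_right _ _)
    have : C ≤ M := le_trans (le_max_right _ _) (le_max_right _ _)
    have hAM : A ≤ M := le_max_left _ _
    have hBM : B ≤ M := le_trans (le_max_left _ _) (le_max_right _ _)
    linarith
  have h4 : |y| ^ e ≤ (3 * M) ^ e := Real.rpow_le_rpow (abs_nonneg _) h3 he0
  have h5 : (3 * M) ^ e = (3:ℝ) ^ e * M ^ e := Real.mul_rpow (by norm_num) hM0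
  have h6 : (3:ℝ) ^ e ≤ 9 := by
    have := Real.rpow_le_rpow_of_exponent_le (by norm_num : (1:ℝ) ≤ 3) he2
    have h9 : (3:ℝ) ^ (2:ℝ) = 9 := by
      rw [show (2:ℝ) = ((2:ℕ):ℝ) by norm_num, Real.rpow_natCast]; norm_num
    linarith
  have hMe : M ^ e ≤ A ^ e + B ^ e + C ^ e := by
    have hAe := Real.rpow_nonneg hA e
    have hBe := Real.rpow_nonneg hB e
    have hCe := Real.rpow_nonneg hC e
    rcases max_cases A (max B C) with ⟨hm, _⟩ | ⟨hm, _⟩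
    · rw [hM, hm]; linarith
    · rcases max_cases B C with ⟨hm2, _⟩ | ⟨hm2, _⟩ <;> rw [hM, hm, hm2] <;> linarith
  calc |y| ^ e ≤ (3:ℝ) ^ e * M ^ e := by rw [← h5]; exact h4
    _ ≤ 9 * (A ^ e + B ^ e + C ^ e) := by
        have h3e : (0:ℝ) ≤ (3:ℝ) ^ e := Real.rpow_nonneg (by norm_num) e
        have hMe0 : (0:ℝ) ≤ M ^ e := Real.rpow_nonneg hM0 e
        nlinarith

lemma g_bound {x c pI qI : ℝ} (hp : 2 ≤ pI) (hq : 2 ≤ qI) (hqp : qI ≤ pI) :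
    |(|x| ^ (pI - 2) * x + |x| ^ (qI - 2) * x + c)| ^ (pI / (pI - 1))
      ≤ 9 * (|x| ^ pI + (1 + |x| ^ pI) + |c| ^ (pI / (pI - 1))) := by
  set e := pI / (pI - 1) with he
  have hp1 : (0:ℝ) < pI - 1 := by linarith
  have he0 : 0 ≤ e := le_of_lt (div_pos (by linarith) hp1)
  have he2 : e ≤ 2 := by rw [he, div_le_iff₀ hp1]; linarith
  have habs : ∀ r : ℝ, 0 < r - 1 → |(|x| ^ (r - 2) * x)| = |x| ^ (r - 1) := by
    intro r hr
    rw [abs_mul, abs_of_nonneg (Real.rpow_nonneg (abs_nonneg x) _),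
      rpow_mul_self' (abs_nonneg x) (by linarith : (0:ℝ) < r - 2 + 1),
      show r - 2 + 1 = r - 1 by ring]
  have htri : |(|x| ^ (pI - 2) * x + |x| ^ (qI - 2) * x + c)|
      ≤ |x| ^ (pI - 1) + |x| ^ (qI - 1) + |c| := by
    calc |(|x| ^ (pI - 2) * x + |x| ^ (qI - 2) * x + c)|
        ≤ |(|x| ^ (pI - 2) * x)| + |(|x| ^ (qI - 2) * x)| + |c| := abs_add_three _ _ _
      _ = |x| ^ (pI - 1) + |x| ^ (qI - 1) + |c| := by
          rw [habs pI (by linarith), habs qI (by linarith)]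
  have key := add3_rpow_le (Real.rpow_nonneg (abs_nonneg x) _)
    (Real.rpow_nonneg (abs_nonneg x) _) (abs_nonneg c) he0 he2 htri
  have hexp : (pI - 1) * e = pI := by
    rw [he]; field_simp
  have hA : (|x| ^ (pI - 1)) ^ e = |x| ^ pI := by
    rw [← Real.rpow_mul (abs_nonneg x), hexp]
  have hB : (|x| ^ (qI - 1)) ^ e ≤ 1 + |x| ^ pI := by
    rw [← Real.rpow_mul (abs_nonneg x)]
    have hd0 : 0 < (qI - 1) * e := by
      apply mul_pos (by linarith)
      exact div_pos (by linarith) hp1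
    have hdp : (qI - 1) * e ≤ pI := by
      rw [he, ← mul_div_assoc, div_le_iff₀ hp1]
      nlinarith
    rcases le_or_gt |x| 1 with hx1 | hx1
    · have := Real.rpow_le_one (abs_nonneg x) hx1 hd0.le
      have := Real.rpow_nonneg (abs_nonneg x) pI
      linarith
    · have := Real.rpow_le_rpow_of_exponent_le hx1.le hdp
      linarith
  calc |(|x| ^ (pI - 2) * x + |x| ^ (qI - 2) * x + c)| ^ e
      ≤ 9 * ((|x| ^ (pI - 1)) ^ e + (|x| ^ (qI - 1)) ^ e + |c| ^ e) := key
    _ ≤ 9 * (|x| ^ pI + (1 + |x| ^ pI) + |c| ^ e) := by rw [hA]; linarith [hB]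

/-- the approximations `f̃ₙ` satisfy the growth and dissipativity conditions
on the positive cone with constants `D₁, D₂, γ > 0` independent of `n`. -/
theorem approxFnQ_growth_dissipativity
    (d : ℕ) (hd : 1 ≤ d) (τ T : ℝ) (hτT : τ < T)
    (f : ℝ → EuclideanSpace ℝ (Fin d) → EuclideanSpace ℝ (Fin d))
    (hfcont : ContinuousOn (Function.uncurry f) (Set.Icc τ T ×ˢ Set.univ))
    (p q : Fin d → ℝ) (hp : ∀ i, 2 ≤ p i) (hq : ∀ i, 2 ≤ q i) (hqp : ∀ i, q i ≤ p i)
    (C₁ C₂ α : ℝ) (hC₁ : 0 < C₁) (hC₂ : 0 < C₂) (hα : 0 < α)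
    (hgrowth : ∀ t ∈ Set.Icc τ T, ∀ u : EuclideanSpace ℝ (Fin d), (∀ i, 0 ≤ u i) →
      ∑ i, |f t u i| ^ (p i / (p i - 1)) ≤ C₁ * (1 + ∑ i, |u i| ^ (p i)))
    (hdiss : ∀ t ∈ Set.Icc τ T, ∀ u : EuclideanSpace ℝ (Fin d), (∀ i, 0 ≤ u i) →
      α * (∑ i, |u i| ^ (p i)) - C₂ ≤ ∑ i, f t u i * u i)
    (ψ : ℕ → ℝ → ℝ)
    (hψsmooth : ∀ n, ContDiff ℝ (⊤ : ℕ∞) (ψ n))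
    (hψrange : ∀ n s, ψ n s ∈ Set.Icc (0 : ℝ) 1)
    (hψone : ∀ n : ℕ, ∀ s : ℝ, 0 ≤ s → s ≤ (n : ℝ) → ψ n s = 1)
    (hψzero : ∀ n : ℕ, ∀ s : ℝ, (n : ℝ) + 1 ≤ s → ψ n s = 0) :
    ∃ D₁ D₂ γ : ℝ, 0 < D₁ ∧ 0 < D₂ ∧ 0 < γ ∧
      ∀ n : ℕ, 1 ≤ n → ∀ t ∈ Set.Icc τ T, ∀ u : EuclideanSpace ℝ (Fin d), (∀ i, 0 ≤ u i) →
        (∑ i, |approxFnQ d p q ψ f n t u i| ^ (p i / (p i - 1))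
            ≤ D₁ * (1 + ∑ i, |u i| ^ (p i))) ∧
        (γ * (∑ i, |u i| ^ (p i)) - D₂ ≤ ∑ i, approxFnQ d p q ψ f n t u i * u i) := by
  refine ⟨10 * C₁ + 9 * d + 19, C₁ + C₂ + 1, min α (1/2), by positivity,
    by positivity, lt_min hα (by norm_num), ?_⟩
  intro n hn t ht u hu
  set s := ψ n ‖u‖ with hsdef
  obtain ⟨hs0, hs1⟩ := hψrange n ‖u‖
  set S := ∑ i, |u i| ^ (p i) with hSdef
  have hS : 0 ≤ S := Finset.sum_nonneg fun i _ => Real.rpow_nonneg (abs_nonneg _) _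
  -- growth at 0
  have hf0 : ∑ i, |f t 0 i| ^ (p i / (p i - 1)) ≤ C₁ := by
    have h0 := hgrowth t ht 0 (fun i => le_refl 0)
    have hz : ∀ i : Fin d, |(0 : EuclideanSpace ℝ (Fin d)) i| ^ (p i) = 0 := by
      intro i
      have : (0 : EuclideanSpace ℝ (Fin d)) i = 0 := rfl
      rw [this, abs_zero, Real.zero_rpow (by linarith [hp i] : p i ≠ 0)]
    rw [Finset.sum_congr rfl (fun i _ => hz i), Finset.sum_const, smul_zero] at h0
    linarith
  have hf := hgrowth t ht u hu
  have hF := hdiss t ht u hu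
  constructor
  · -- growth bound
    have key : ∀ i : Fin d, |approxFnQ d p q ψ f n t u i| ^ (p i / (p i - 1))
        ≤ |f t u i| ^ (p i / (p i - 1)) +
          (9 * (|u i| ^ (p i) + (1 + |u i| ^ (p i)) + |f t 0 i| ^ (p i / (p i - 1)))) := by
      intro i
      have hpe : 0 ≤ p i / (p i - 1) :=
        le_of_lt (div_pos (by linarith [hp i]) (by linarith [hp i]))
      have h1 : |approxFnQ d p q ψ f n t u i| ^ (p i / (p i - 1))
          ≤ |f t u i| ^ (p i / (p i - 1)) +
            |(|u i| ^ (p i - 2) * u i + |u i| ^ (q i - 2) * u i + f t 0 i)| ^ (p i / (p i - 1)) := by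
        exact combo_rpow_le hs0 hs1 hpe
      exact h1.trans (by linarith [g_bound (x := u i) (c := f t 0 i) (hp i) (hq i) (hqp i)])
    calc ∑ i, |approxFnQ d p q ψ f n t u i| ^ (p i / (p i - 1))
        ≤ ∑ i, (|f t u i| ^ (p i / (p i - 1)) +
            (9 * (|u i| ^ (p i) + (1 + |u i| ^ (p i)) + |f t 0 i| ^ (p i / (p i - 1))))) :=
          Finset.sum_le_sum fun i _ => key i
      _ = (∑ i, |f t u i| ^ (p i / (p i - 1))) +
            9 * (S + ((d : ℝ) + S) + ∑ i, |f t 0 i| ^ (p i / (p i - 1))) := by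
          simp only [Finset.sum_add_distrib, ← Finset.mul_sum, Finset.sum_const,
            Finset.card_univ, Fintype.card_fin, nsmul_eq_mul, mul_one, hSdef]
      _ ≤ (10 * C₁ + 9 * d + 19) * (1 + S) := by
          have hd0 : (0:ℝ) ≤ (d:ℝ) := Nat.cast_nonneg d
          nlinarith [mul_nonneg hC₁.le hS, mul_nonneg hd0 hS]
  · -- dissipativity
    have expand : ∑ i, approxFnQ d p q ψ f n t u i * u i
        = s * (∑ i, f t u i * u i) +
          (1 - s) * (∑ i, ((u i) ^ (p i) + (u i) ^ (q i) + f t 0 i * u i)) := by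
      rw [Finset.mul_sum, Finset.mul_sum, ← Finset.sum_add_distrib]
      refine Finset.sum_congr rfl fun i _ => ?_
      have hx := hu i
      have eA : |u i| ^ (p i - 2) * u i * u i = (u i) ^ (p i) := by
        rw [abs_of_nonneg hx,
          rpow_mul_self' hx (by linarith [hp i] : (0:ℝ) < p i - 2 + 1),
          show p i - 2 + 1 = p i - 1 by ring,
          rpow_mul_self' hx (by linarith [hp i] : (0:ℝ) < p i - 1 + 1),
          show p i - 1 + 1 = p i by ring]
      have eB : |u i| ^ (q i - 2) * u i * u i = (u i) ^ (q i) := by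
        rw [abs_of_nonneg hx,
          rpow_mul_self' hx (by linarith [hq i] : (0:ℝ) < q i - 2 + 1),
          show q i - 2 + 1 = q i - 1 by ring,
          rpow_mul_self' hx (by linarith [hq i] : (0:ℝ) < q i - 1 + 1),
          show q i - 1 + 1 = q i by ring]
      show (s * f t u i + (1 - s) * (|u i| ^ (p i - 2) * u i + |u i| ^ (q i - 2) * u i
          + f t 0 i)) * u i = _
      calc (s * f t u i + (1 - s) * (|u i| ^ (p i - 2) * u i + |u i| ^ (q i - 2) * u i
              + f t 0 i)) * u i
          = s * (f t u i * u i) + (1 - s) * (|u i| ^ (p i - 2) * u i * u i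
              + |u i| ^ (q i - 2) * u i * u i + f t 0 i * u i) := by ring
        _ = _ := by rw [eA, eB]
    have hG : S / 2 - C₁ ≤ ∑ i, ((u i) ^ (p i) + (u i) ^ (q i) + f t 0 i * u i) := by
      have keyi : ∀ i : Fin d, |u i| ^ (p i) / 2 - |f t 0 i| ^ (p i / (p i - 1))
          ≤ (u i) ^ (p i) + (u i) ^ (q i) + f t 0 i * u i := by
        intro i
        have hx := hu i
        have hq0 : 0 ≤ (u i) ^ (q i) := Real.rpow_nonneg hx _
        have hyoung := young_half (abs_nonneg (f t 0 i)) hx (hp i)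
        have hc : -(|f t 0 i| * u i) ≤ f t 0 i * u i := by
          have := abs_mul (f t 0 i) (u i)
          have h2 := neg_abs_le (f t 0 i * u i)
          rw [abs_mul, abs_of_nonneg hx] at h2
          exact h2
        rw [abs_of_nonneg hx]
        nlinarith
      calc S / 2 - C₁ ≤ ∑ i, (|u i| ^ (p i) / 2 - |f t 0 i| ^ (p i / (p i - 1))) := by
            rw [Finset.sum_sub_distrib, ← Finset.sum_div]
            have : ∑ i, |u i| ^ (p i) = S := rfl
            linarith [hf0]
        _ ≤ _ := Finset.sum_le_sum fun i _ => keyi i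
    rw [expand]
    have h1 : s * (α * S - C₂) ≤ s * (∑ i, f t u i * u i) :=
      mul_le_mul_of_nonneg_left hF hs0
    have h2 : (1 - s) * (S / 2 - C₁) ≤ (1 - s) * (∑ i, ((u i) ^ (p i) + (u i) ^ (q i)
        + f t 0 i * u i)) := mul_le_mul_of_nonneg_left hG (by linarith)
    have hγ1 : min α (1/2) ≤ α := min_le_left _ _
    have hγ2 : min α (1/2) ≤ 1/2 := min_le_right _ _
    nlinarith [mul_nonneg (mul_nonneg hs0 (sub_nonneg.2 hγ1)) hS,
      mul_nonneg (mul_nonneg (sub_nonneg.2 hs1) (sub_nonneg.2 hγ2)) hS]
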